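/- Let τ be the algebra automorphism of rational functions in variables γ_{kl} and c defined by τ(γ_{2k+1,j}) = γ_{2k+1,j}, τ(γ_{2k,j}) = −γ_{2k,j}, τ(c) = −c, extended to shift operators by τ e^{± ic ∂_{γ_{2k-1,j}}} = e^{± ic ∂_{γ_{2k-1,j}}} τ and τ e^{± ic ∂_{γ_{2k,j}}} = e^{∓ ic ∂_{γ_{2k,j}}} τ. Then for the Zhelobenko–Stern difference operators I_{2k+1,2k} and I_{2k+2,2k+1}, one has τ I_{2k+1,2k} = −I_{2k+1,2k} τ and τ (i I_{2k+2,2k+1}) = −(i I_{2k+2,2k+1}) τ. -/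

import Mathlib

open Finset

/-- The space of functions of the Gelfand-Tsetlin variables `γ_{m,j}` (indexed by
pairs `(m,j)` of naturals, `m` the row, `j` the position, both 1-based) and of the
parameter `c`. -/
abbrev GTFun : Type := ((ℕ × ℕ) → ℂ) × ℂ → ℂ

/-- The involution `τ`: `γ_{2k,j} ↦ -γ_{2k,j}`, `γ_{2k+1,j} ↦ γ_{2k+1,j}`, `c ↦ -c`. -/
noncomputable def tauOp (f : GTFun) : GTFun := fun p =>
  f (fun mj => if mj.1 % 2 = 0 then -p.1 mj else p.1 mj, -p.2)

/-- The shift operator `e^{ε ic ∂_{γ_{m,j}}}`: it replaces `γ_{m,j}` by `γ_{m,j} + ε ic`. -/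
noncomputable def shiftOp (m j : ℕ) (ε : ℤ) (f : GTFun) : GTFun := fun p =>
  f (Function.update p.1 (m, j) (p.1 (m, j) + (ε : ℂ) * Complex.I * p.2), p.2)

/-- The Zhelobenko-Stern difference operator `I_{2k+1,2k}`. -/
noncomputable def ZS1 (k : ℕ) (f : GTFun) : GTFun := fun p =>
  let γ := p.1; let c := p.2;
  -(1 / (Complex.I * c)) * ∑ j ∈ Finset.Icc 1 k,
      ((∏ r ∈ Finset.Icc 1 (k - 1), (γ (2 * k - 2, r) + γ (2 * k - 1, j) + Complex.I * c / 2)) *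
        (∏ r ∈ Finset.Icc 1 k, (γ (2 * k - 1, j) - γ (2 * k, r) + Complex.I * c / 2))) /
      (2 * ∏ r ∈ (Finset.Icc 1 k).erase j,
        ((γ (2 * k - 1, j) - γ (2 * k - 1, r)) * (γ (2 * k - 1, j) + γ (2 * k - 1, r) + Complex.I * c))) *
      shiftOp (2 * k - 1) j 1 f p
  - (1 / (Complex.I * c)) * ∑ j ∈ Finset.Icc 1 k,
      ((∏ r ∈ Finset.Icc 1 (k - 1), (γ (2 * k - 1, j) - γ (2 * k - 2, r) - Complex.I * c / 2)) *
        (∏ r ∈ Finset.Icc 1 k, (γ (2 * k, r) + γ (2 * k - 1, j) - Complex.I * c / 2))) /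
      (2 * ∏ r ∈ (Finset.Icc 1 k).erase j,
        ((γ (2 * k - 1, j) - γ (2 * k - 1, r)) * (γ (2 * k - 1, j) + γ (2 * k - 1, r) - Complex.I * c))) *
      shiftOp (2 * k - 1) j (-1) f p

/-- The Zhelobenko-Stern difference operator `i I_{2k+2,2k+1}`. -/
noncomputable def ZS2 (k : ℕ) (f : GTFun) : GTFun := fun p =>
  let γ := p.1; let c := p.2;
  (1 / c) * ∑ j ∈ Finset.Icc 1 k,
      (∏ r ∈ Finset.Icc 1 (k + 1), ((γ (2 * k, j) + Complex.I * c / 2) ^ 2 - γ (2 * k + 1, r) ^ 2)) /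
      (2 * γ (2 * k, j) * (γ (2 * k, j) + Complex.I * c / 2) *
        ∏ r ∈ (Finset.Icc 1 k).erase j, (γ (2 * k, j) ^ 2 - γ (2 * k, r) ^ 2)) *
      shiftOp (2 * k) j 1 f p
  + (1 / c) * ∑ j ∈ Finset.Icc 1 k,
      (∏ r ∈ Finset.Icc 1 k, ((γ (2 * k, j) - Complex.I * c / 2) ^ 2 - γ (2 * k - 1, r) ^ 2)) /
      (2 * γ (2 * k, j) * (γ (2 * k, j) - Complex.I * c / 2) *
        ∏ r ∈ (Finset.Icc 1 k).erase j, (γ (2 * k, j) ^ 2 - γ (2 * k, r) ^ 2)) *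
      shiftOp (2 * k) j (-1) f p
  - (1 / (Complex.I * c)) *
      ((∏ r ∈ Finset.Icc 1 k, γ (2 * k - 1, r)) * (∏ r ∈ Finset.Icc 1 (k + 1), γ (2 * k + 1, r))) /
      (∏ r ∈ Finset.Icc 1 k, ((γ (2 * k, r) + Complex.I * c / 2) * (γ (2 * k, r) - Complex.I * c / 2))) *
      f p

/-!
`τ` is composition with the involution `tauVars` of the variables, so conjugating a shift by `τ`
reverses it in the odd rows and keeps it in the even rows. In `I_{2k+1,2k}` the coefficient of
`e^{-ic∂_{γ_{2k-1,j}}}` is minus the `τ`-image of the coefficient of `e^{ic∂_{γ_{2k-1,j}}}`, so `τ`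
exchanges the two sums and changes their sign. In `i I_{2k+2,2k+1}` every coefficient is odd under
`τ`: the prefactor `1/c` changes sign, while `τ` negates `γ_{2k,j} ± ic/2`, which enters only
squared or in pairs.
-/

open Complex

def tauVars (p : ((ℕ × ℕ) → ℂ) × ℂ) : ((ℕ × ℕ) → ℂ) × ℂ :=
  (fun mj => if mj.1 % 2 = 0 then -p.1 mj else p.1 mj, -p.2)

lemma tauOp_apply (f : GTFun) (p : ((ℕ × ℕ) → ℂ) × ℂ) : tauOp f p = f (tauVars p) := rfl

lemma tauVars_involutive : Function.Involutive tauVars := by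
  intro p
  ext mj
  · by_cases h : mj.1 % 2 = 0 <;> simp [tauVars, h]
  · simp [tauVars]

lemma tauVars_fst_of_even {m : ℕ} (hm : m % 2 = 0) (j : ℕ) (p : ((ℕ × ℕ) → ℂ) × ℂ) :
    (tauVars p).1 (m, j) = -p.1 (m, j) := if_pos hm

lemma tauVars_fst_of_odd {m : ℕ} (hm : m % 2 = 1) (j : ℕ) (p : ((ℕ × ℕ) → ℂ) × ℂ) :
    (tauVars p).1 (m, j) = p.1 (m, j) := if_neg (by omega)

lemma tauVars_snd (p : ((ℕ × ℕ) → ℂ) × ℂ) : (tauVars p).2 = -p.2 := rfl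

lemma tauVars_update (p : ((ℕ × ℕ) → ℂ) × ℂ) (m j : ℕ) (v : ℂ) :
    tauVars (Function.update p.1 (m, j) v, p.2)
      = (Function.update (tauVars p).1 (m, j) (if m % 2 = 0 then -v else v), (tauVars p).2) := by
  ext mj
  · rcases eq_or_ne mj (m, j) with rfl | h
    · simp [tauVars]
    · simp [tauVars, Function.update_of_ne h]
  · rfl

lemma tauOp_shiftOp_of_odd {m : ℕ} (hm : m % 2 = 1) (j : ℕ) (ε : ℤ) (f : GTFun) :
    tauOp (shiftOp m j ε f) = shiftOp m j (-ε) (tauOp f) := by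
  funext p
  simp only [shiftOp, tauOp_apply, tauVars_update, tauVars_fst_of_odd hm, tauVars_snd]
  simp [hm]

lemma tauOp_shiftOp_of_even {m : ℕ} (hm : m % 2 = 0) (j : ℕ) (ε : ℤ) (f : GTFun) :
    tauOp (shiftOp m j ε f) = shiftOp m j ε (tauOp f) := by
  funext p
  simp only [shiftOp, tauOp_apply, tauVars_update, tauVars_fst_of_even hm, tauVars_snd]
  rw [if_pos hm, mul_neg, neg_add]

noncomputable def zs1Coeff (k j : ℕ) (p : ((ℕ × ℕ) → ℂ) × ℂ) : ℂ :=
  let γ := p.1; let c := p.2;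
  -(1 / (I * c)) *
    ((∏ r ∈ Icc 1 (k - 1), (γ (2 * k - 2, r) + γ (2 * k - 1, j) + I * c / 2)) *
      (∏ r ∈ Icc 1 k, (γ (2 * k - 1, j) - γ (2 * k, r) + I * c / 2))) /
    (2 * ∏ r ∈ (Icc 1 k).erase j,
      ((γ (2 * k - 1, j) - γ (2 * k - 1, r)) * (γ (2 * k - 1, j) + γ (2 * k - 1, r) + I * c)))

lemma ZS1_eq_sum {k : ℕ} (hk : 1 ≤ k) (f : GTFun) (p : ((ℕ × ℕ) → ℂ) × ℂ) :
    ZS1 k f p = ∑ j ∈ Icc 1 k, (zs1Coeff k j p * shiftOp (2 * k - 1) j 1 f p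
      - zs1Coeff k j (tauVars p) * shiftOp (2 * k - 1) j (-1) f p) := by
  have hodd : (2 * k - 1) % 2 = 1 := by omega
  simp only [ZS1, zs1Coeff, tauVars_fst_of_odd hodd, tauVars_fst_of_even (m := 2 * k - 2) (by omega),
    tauVars_fst_of_even (m := 2 * k) (by omega), tauVars_snd, mul_sum, ← sum_sub_distrib]
  have h₁ : ∀ a b : ℂ, -a + b + I * -p.2 / 2 = b - a - I * p.2 / 2 := fun a b => by ring
  have h₂ : ∀ a b : ℂ, b - -a + I * -p.2 / 2 = a + b - I * p.2 / 2 := fun a b => by ring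
  have h₃ : ∀ a : ℂ, a + I * -p.2 = a - I * p.2 := fun a => by ring
  simp only [h₁, h₂, h₃]
  refine sum_congr rfl fun j _ => ?_
  ring

lemma tauOp_ZS1 {k : ℕ} (hk : 1 ≤ k) (f : GTFun) : tauOp (ZS1 k f) = -ZS1 k (tauOp f) := by
  have hodd : (2 * k - 1) % 2 = 1 := by omega
  funext p
  rw [tauOp_apply, Pi.neg_apply, ZS1_eq_sum hk, ZS1_eq_sum hk, tauVars_involutive p,
    ← sum_neg_distrib]
  refine sum_congr rfl fun j _ => ?_
  rw [← tauOp_apply (shiftOp _ _ _ f), ← tauOp_apply (shiftOp _ _ _ f), tauOp_shiftOp_of_odd hodd,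
    tauOp_shiftOp_of_odd hodd, neg_neg]
  ring

lemma tauOp_ZS2 {k : ℕ} (hk : 1 ≤ k) (f : GTFun) : tauOp (ZS2 k f) = -ZS2 k (tauOp f) := by
  have hodd : (2 * k - 1) % 2 = 1 := by omega
  have heven : 2 * k % 2 = 0 := by omega
  funext p
  simp only [tauOp_apply, Pi.neg_apply, ZS2, tauVars_fst_of_odd hodd,
    tauVars_fst_of_odd (m := 2 * k + 1) (by omega), tauVars_fst_of_even heven, tauVars_snd]
  simp only [← tauOp_apply (shiftOp _ _ _ f), ← tauOp_apply f, tauOp_shiftOp_of_even heven]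
  have h₁ : ∀ a : ℂ, -a + I * -p.2 / 2 = -(a + I * p.2 / 2) := fun a => by ring
  have h₂ : ∀ a : ℂ, -a - I * -p.2 / 2 = -(a - I * p.2 / 2) := fun a => by ring
  simp only [h₁, h₂]
  simp only [neg_sq, neg_mul, mul_neg, neg_neg]
  ring

/-- `τ` anticommutes with the Zhelobenko-Stern operators:
`τ I_{2k+1,2k} = -I_{2k+1,2k} τ` and `τ (i I_{2k+2,2k+1}) = -(i I_{2k+2,2k+1}) τ`. -/
theorem tau_anticommutes_with_ZS (k : ℕ) (hk : 1 ≤ k) :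
    (∀ f : GTFun, tauOp (ZS1 k f) = -(ZS1 k (tauOp f))) ∧
    (∀ f : GTFun, tauOp (ZS2 k f) = -(ZS2 k (tauOp f))) :=
  ⟨tauOp_ZS1 hk, tauOp_ZS2 hk⟩
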